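/- arXiv:2108.00420 — 3 statements merged into one kernel-verified Lean document; each statement's English description precedes it below -/
import Mathlib

section
/- If an interior vertex v of a grove has degree 1, with its unique incident edge e, then replacing e by any of the other five edges incident to v (rotating the edge around v to an adjacent position within one of the six unit triangles containing v) yields a graph that is again a grove of the same size. -/
/-!
A vertex with at most one neighbour lies on no cycle and is an inner vertex of no path, so
deleting its edges changes neither acyclicity nor reachability between the remaining vertices.
Spinning the edge at a degree-one pivot leaves the graph with the pivot's edges deleted
unchanged, so the spun graph is acyclic and connects the boundary vertices (none of which is the
interior pivot) exactly as before; the pivot itself joins the component of its new neighbour.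
-/

open SimpleGraph

/-- Vertices of the triangular lattice. -/
abbrev V2 : Type := ℤ × ℤ

/-- Adjacency in the triangular lattice: the six unit directions. -/
def latticeAdj (p q : V2) : Prop :=
  (q.1 - p.1, q.2 - p.2) ∈
    ({(2, 0), (-2, 0), (1, 1), (-1, -1), (1, -1), (-1, 1)} : Set V2)

/-- Vertex set of a simplified grove of size `n`: the triangular region with
corners `(-n, 0)`, `(n, 0)`, `(0, -n)`, with the parity condition `i + j ≡ n (mod 2)`. -/
def groveVerts (n : ℕ) : Set V2 :=
  {p | p.2 ≤ 0 ∧ -(n : ℤ) ≤ p.1 + p.2 ∧ p.1 - p.2 ≤ (n : ℤ) ∧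
    (p.1 + p.2) % 2 = (n : ℤ) % 2}

/-- The prescribed boundary vertex sets of a simplified grove of size `n`:
the three corner singletons, the west pairs `{(-i,0), ((-n-i)/2, (-n+i)/2)}`
(parametrized by `i = n - 2a`), the east pairs `{(i,0), ((n+i)/2, (i-n)/2)}`,
the south pairs `{(-n+i, -i), (n-i, -i)}` for `n/2 < i < n`, and the middle
triplet `{(0,0), (-n/2, -n/2), (n/2, -n/2)}` when `n` is even. -/
def boundarySets (n : ℕ) : Set (Set V2) :=
  {({(-(n : ℤ), 0)} : Set V2), {((n : ℤ), 0)}, {(0, -(n : ℤ))}} ∪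
  {S | ∃ a : ℤ, 0 < a ∧ 2 * a < (n : ℤ) ∧
      S = ({(2 * a - (n : ℤ), 0), (a - (n : ℤ), -a)} : Set V2)} ∪
  {S | ∃ a : ℤ, 0 < a ∧ 2 * a < (n : ℤ) ∧
      S = ({((n : ℤ) - 2 * a, 0), ((n : ℤ) - a, -a)} : Set V2)} ∪
  {S | ∃ i : ℤ, (n : ℤ) < 2 * i ∧ i < (n : ℤ) ∧
      S = ({(-(n : ℤ) + i, -i), ((n : ℤ) - i, -i)} : Set V2)} ∪
  {S | ∃ a : ℤ, 0 < a ∧ 2 * a = (n : ℤ) ∧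
      S = ({(0, 0), (-a, -a), (a, -a)} : Set V2)}

/-- `G` is a simplified grove of size `n`: an acyclic graph with edges along the
triangular lattice inside the region, such that every boundary set lies in a single
connected component, every vertex of the region is connected to some boundary set,
and distinct boundary sets lie in distinct components (so each component contains
exactly one boundary set). -/
structure IsGrove (n : ℕ) (G : SimpleGraph V2) : Prop where
  supported : ∀ ⦃p q : V2⦄, G.Adj p q →
    p ∈ groveVerts n ∧ q ∈ groveVerts n ∧ latticeAdj p q
  acyclic : G.IsAcyclic
  conn_in : ∀ S ∈ boundarySets n, ∀ u ∈ S, ∀ v ∈ S, G.Reachable u v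
  conn_ex : ∀ v ∈ groveVerts n, ∃ S ∈ boundarySets n, ∃ u ∈ S, G.Reachable v u
  conn_sep : ∀ S ∈ boundarySets n, ∀ S' ∈ boundarySets n, S ≠ S' →
    ∀ u ∈ S, ∀ v ∈ S', ¬ G.Reachable u v

/-- The three edges of the downward unit triangle with bottom apex `p`
(its other two vertices are `(p.1 - 1, p.2 + 1)` and `(p.1 + 1, p.2 + 1)`). -/
def downTriEdges (p : V2) : Set (Sym2 V2) :=
  {s(p, (p.1 - 1, p.2 + 1)), s(p, (p.1 + 1, p.2 + 1)),
   s((p.1 - 1, p.2 + 1), (p.1 + 1, p.2 + 1))}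

/-- Apex positions of the downward unit triangles contained in the size-`n` region. -/
def downPos (n : ℕ) : Set V2 :=
  {p | p.2 < 0 ∧ -(n : ℤ) ≤ p.1 + p.2 ∧ p.1 - p.2 ≤ (n : ℤ) ∧
    (p.1 + p.2) % 2 = (n : ℤ) % 2}

/-- The alternating-sign-triangle entry of `G` at the downward triangle with apex `p`:
`1 - e` where `e` is the number of edges of `G` in that triangle. -/
noncomputable def ast (G : SimpleGraph V2) (p : V2) : ℤ :=
  1 - ((G.edgeSet ∩ downTriEdges p).ncard : ℤ)

/-- Interior vertices of the size-`n` region. -/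
def interiorVerts (n : ℕ) : Set V2 :=
  {p | p ∈ groveVerts n ∧ p.2 < 0 ∧ -(n : ℤ) < p.1 + p.2 ∧ p.1 - p.2 < (n : ℤ)}

/-- Clockwise rotation by 60° of a lattice direction. -/
def cw (d : V2) : V2 := ((d.1 + 3 * d.2) / 2, (d.2 - d.1) / 2)

/-- Counterclockwise rotation by 60° of a lattice direction. -/
def ccw (d : V2) : V2 := ((d.1 - 3 * d.2) / 2, (d.1 + d.2) / 2)

/-- Replace the edge `e` of `G` by the edge `e'`. -/
def replaceEdge (G : SimpleGraph V2) (e e' : Sym2 V2) : SimpleGraph V2 :=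
  SimpleGraph.fromEdgeSet ((G.edgeSet \ {e}) ∪ {e'})

/-- A spin: the unique edge `{v, w}` at an interior degree-one pivot `v` is rotated
to an adjacent position `{v, w'}` around `v` (clockwise or counterclockwise). -/
def IsSpin (n : ℕ) (G G' : SimpleGraph V2) : Prop :=
  ∃ v w w' : V2, v ∈ interiorVerts n ∧ (∀ u, G.Adj v u ↔ u = w) ∧
    (w' - v = cw (w - v) ∨ w' - v = ccw (w - v)) ∧
    G' = replaceEdge G s(v, w) s(v, w')

namespace SimpleGraph

variable {V : Type*} {G : SimpleGraph V} {v : V}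

theorem Walk.IsPath.notMem_support_of_subsingleton_neighborSet {a b : V} {p : G.Walk a b}
    (hp : p.IsPath) (hv : (G.neighborSet v).Subsingleton) (ha : a ≠ v) (hb : b ≠ v) :
    v ∉ p.support := by
  intro hmem
  obtain ⟨i, rfl, hi⟩ := Walk.mem_support_iff_exists_getVert.mp hmem
  have hi0 : i ≠ 0 := by rintro rfl; exact ha p.getVert_zero.symm
  have hilt : i < p.length := by
    refine lt_of_le_of_ne hi ?_
    rintro rfl
    exact hb p.getVert_length.symm
  obtain ⟨x, y, hxy, hpair⟩ :=
    Set.ncard_eq_two.mp (hp.ncard_neighborSet_toSubgraph_internal_eq_two hi0 hilt)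
  have hsub := p.toSubgraph.neighborSet_subset (p.getVert i)
  exact hxy (hv (hsub (by simp [hpair])) (hsub (by simp [hpair])))

theorem Walk.IsCycle.notMem_support_of_subsingleton_neighborSet {a : V} {c : G.Walk a a}
    (hc : c.IsCycle) (hv : (G.neighborSet v).Subsingleton) : v ∉ c.support := by
  intro hmem
  obtain ⟨x, y, hxy, hpair⟩ := Set.ncard_eq_two.mp (hc.ncard_neighborSet_toSubgraph_eq_two hmem)
  have hsub := c.toSubgraph.neighborSet_subset v
  exact hxy (hv (hsub (by simp [hpair])) (hsub (by simp [hpair])))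

theorem Walk.edges_subset_edgeSet_deleteIncidenceSet {a b : V} (p : G.Walk a b)
    (hv : v ∉ p.support) : ∀ e ∈ p.edges, e ∈ (G.deleteIncidenceSet v).edgeSet := by
  intro e he
  rw [edgeSet_deleteIncidenceSet]
  exact ⟨p.edges_subset_edgeSet he, fun hinc => hv (Walk.mem_support_of_mem_edges he hinc.2)⟩

theorem reachable_deleteIncidenceSet_iff (hv : (G.neighborSet v).Subsingleton) {a b : V}
    (ha : a ≠ v) (hb : b ≠ v) : (G.deleteIncidenceSet v).Reachable a b ↔ G.Reachable a b := by
  classical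
  refine ⟨fun h => h.mono (G.deleteIncidenceSet_le v), fun ⟨p⟩ => ?_⟩
  let q := p.toPath
  exact ⟨(q : G.Walk a b).transfer _ <| Walk.edges_subset_edgeSet_deleteIncidenceSet _
    (q.2.notMem_support_of_subsingleton_neighborSet hv ha hb)⟩

theorem isAcyclic_deleteIncidenceSet_iff (hv : (G.neighborSet v).Subsingleton) :
    (G.deleteIncidenceSet v).IsAcyclic ↔ G.IsAcyclic := by
  refine ⟨fun h a c hc => ?_, IsAcyclic.anti (G.deleteIncidenceSet_le v)⟩
  have hE := c.edges_subset_edgeSet_deleteIncidenceSet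
    (hc.notMem_support_of_subsingleton_neighborSet hv)
  exact h (c.transfer _ hE) (hc.transfer hE)

end SimpleGraph

section replaceEdge

variable {G : SimpleGraph V2} {v w w' : V2}

theorem replaceEdge_adj {e e' : Sym2 V2} {p q : V2} :
    (replaceEdge G e e').Adj p q ↔ (G.Adj p q ∧ s(p, q) ≠ e ∨ s(p, q) = e') ∧ p ≠ q := by
  simp [replaceEdge, fromEdgeSet_adj, or_comm]

theorem neighborSet_replaceEdge_subset (hleaf : G.neighborSet v ⊆ {w}) :
    (replaceEdge G s(v, w) s(v, w')).neighborSet v ⊆ {w'} := by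
  intro u hu
  obtain ⟨⟨hu, hne⟩ | hu, -⟩ := replaceEdge_adj.mp hu
  · exact absurd (by rw [Set.mem_singleton_iff.mp (hleaf hu)]) hne
  · rcases Sym2.eq_iff.mp hu with ⟨-, rfl⟩ | ⟨rfl, rfl⟩ <;> rfl

theorem deleteIncidenceSet_replaceEdge :
    (replaceEdge G s(v, w) s(v, w')).deleteIncidenceSet v = G.deleteIncidenceSet v := by
  ext p q
  simp only [deleteIncidenceSet_adj, replaceEdge_adj]
  constructor
  · rintro ⟨⟨⟨h, -⟩ | h, -⟩, hp, hq⟩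
    · exact ⟨h, hp, hq⟩
    · rcases Sym2.eq_iff.mp h with ⟨rfl, -⟩ | ⟨-, rfl⟩ <;> contradiction
  · rintro ⟨h, hp, hq⟩
    refine ⟨⟨Or.inl ⟨h, fun he => ?_⟩, h.ne⟩, hp, hq⟩
    rcases Sym2.eq_iff.mp he with ⟨rfl, -⟩ | ⟨-, rfl⟩ <;> contradiction

theorem reachable_replaceEdge_iff (hleaf : G.neighborSet v ⊆ {w}) {a b : V2}
    (ha : a ≠ v) (hb : b ≠ v) :
    (replaceEdge G s(v, w) s(v, w')).Reachable a b ↔ G.Reachable a b := by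
  rw [← reachable_deleteIncidenceSet_iff
      (Set.subsingleton_singleton.anti (neighborSet_replaceEdge_subset hleaf)) ha hb,
    deleteIncidenceSet_replaceEdge,
    reachable_deleteIncidenceSet_iff (Set.subsingleton_singleton.anti hleaf) ha hb]

theorem isAcyclic_replaceEdge_iff (hleaf : G.neighborSet v ⊆ {w}) :
    (replaceEdge G s(v, w) s(v, w')).IsAcyclic ↔ G.IsAcyclic := by
  rw [← isAcyclic_deleteIncidenceSet_iff
      (Set.subsingleton_singleton.anti (neighborSet_replaceEdge_subset hleaf)),
    deleteIncidenceSet_replaceEdge,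
    isAcyclic_deleteIncidenceSet_iff (Set.subsingleton_singleton.anti hleaf)]

end replaceEdge

theorem latticeAdj.symm {p q : V2} (h : latticeAdj p q) : latticeAdj q p := by
  simp only [latticeAdj, Set.mem_insert_iff, Set.mem_singleton_iff, Prod.ext_iff] at h ⊢
  omega

theorem latticeAdj.ne {p q : V2} (h : latticeAdj p q) : p ≠ q := by
  rintro rfl
  simp [latticeAdj, Prod.ext_iff] at h

theorem mem_groveVerts_of_latticeAdj {n : ℕ} {p q : V2} (hp : p ∈ interiorVerts n)
    (h : latticeAdj p q) : q ∈ groveVerts n := by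
  obtain ⟨⟨-, -, -, hpar⟩, hp2, hpl, hpr⟩ := hp
  simp only [latticeAdj, Set.mem_insert_iff, Set.mem_singleton_iff, Prod.ext_iff] at h
  refine ⟨?_, ?_, ?_, ?_⟩ <;> omega

theorem notMem_of_mem_boundarySets {n : ℕ} {p : V2} {S : Set V2} (hp : p ∈ interiorVerts n)
    (hS : S ∈ boundarySets n) : p ∉ S := by
  obtain ⟨-, hp2, hpl, hpr⟩ := hp
  simp only [boundarySets, Set.mem_union, Set.mem_insert_iff, Set.mem_singleton_iff,
    Set.mem_ofPred_eq] at hS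
  rcases hS with ((((rfl | rfl | rfl) | ⟨a, -, -, rfl⟩) | ⟨a, -, -, rfl⟩) | ⟨a, -, -, rfl⟩) |
      ⟨a, -, ha, rfl⟩ <;>
    simp only [Set.mem_insert_iff, Set.mem_singleton_iff, Prod.ext_iff] <;> omega

theorem spin_any_edge_isGrove_general (n : ℕ) (G : SimpleGraph V2) (hG : IsGrove n G)
    (v w w' : V2) (hv : v ∈ interiorVerts n) (hdeg : ∀ u, G.Adj v u ↔ u = w)
    (hw' : latticeAdj v w') :
    IsGrove n (replaceEdge G s(v, w) s(v, w')) := by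
  have hleaf : G.neighborSet v ⊆ {w} := fun u hu => (hdeg u).mp hu
  have hbdry : ∀ S ∈ boundarySets n, ∀ u ∈ S, u ≠ v := fun S hS u hu huv =>
    notMem_of_mem_boundarySets hv hS (huv ▸ hu)
  refine ⟨fun p q hpq => ?_, (isAcyclic_replaceEdge_iff hleaf).mpr hG.acyclic,
    fun S hS a ha b hb => ?_, fun p hp => ?_, fun S hS S' hS' hSS' a ha b hb hab => ?_⟩
  · obtain ⟨⟨hG', -⟩ | hvw', -⟩ := replaceEdge_adj.mp hpq
    · exact hG.supported hG'
    · rcases Sym2.eq_iff.mp hvw' with ⟨rfl, rfl⟩ | ⟨rfl, rfl⟩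
      · exact ⟨hv.1, mem_groveVerts_of_latticeAdj hv hw', hw'⟩
      · exact ⟨mem_groveVerts_of_latticeAdj hv hw', hv.1, hw'.symm⟩
  · exact (reachable_replaceEdge_iff hleaf (hbdry S hS a ha) (hbdry S hS b hb)).mpr
      (hG.conn_in S hS a ha b hb)
  · by_cases hpv : p = v
    · subst p
      obtain ⟨S, hS, u, hu, hw'u⟩ := hG.conn_ex w' (mem_groveVerts_of_latticeAdj hv hw')
      have hvw' : (replaceEdge G s(v, w) s(v, w')).Adj v w' :=
        replaceEdge_adj.mpr ⟨Or.inr rfl, hw'.ne⟩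
      exact ⟨S, hS, u, hu, hvw'.reachable.trans
        ((reachable_replaceEdge_iff hleaf hw'.ne.symm (hbdry S hS u hu)).mpr hw'u)⟩
    · obtain ⟨S, hS, u, hu, hpu⟩ := hG.conn_ex p hp
      exact ⟨S, hS, u, hu, (reachable_replaceEdge_iff hleaf hpv (hbdry S hS u hu)).mpr hpu⟩
  · exact hG.conn_sep S hS S' hS' hSS' a ha b hb
      ((reachable_replaceEdge_iff hleaf (hbdry S hS a ha) (hbdry S' hS' b hb)).mp hab)

/-- If an interior vertex `v` of a grove has degree 1, with unique incident edge
`{v, w}`, then replacing it by any of the other five lattice edges incident to `v`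
yields again a grove of the same size. -/
theorem spin_any_edge_isGrove (n : ℕ) (G : SimpleGraph V2) (hG : IsGrove n G)
    (v w w' : V2) (hv : v ∈ interiorVerts n) (hdeg : ∀ u, G.Adj v u ↔ u = w)
    (hw' : latticeAdj v w') (hne : w' ≠ w) :
    IsGrove n (replaceEdge G s(v, w) s(v, w')) :=
  spin_any_edge_isGrove_general n G hG v w w' hv hdeg hw'
end

section
/- A spin of type 2, 4, or 6 (rotating a pendant edge at a pivot vertex across a downward triangle) changes the associated alternating sign triangle by adding or subtracting exactly one of the three sub-triangle patterns: (top row -1, 1; bottom 0), (top row 1, 0; bottom -1), or (top row 0, -1; bottom 1). -/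
open SimpleGraph

/-- Sub-triangle pattern `(-1, 1; 0)`: entries at the two horizontally adjacent
downward triangles with apexes `q` and `(q.1 + 2, q.2)` and at the downward triangle
between and below them, with apex `(q.1 + 1, q.2 - 1)`. -/
def pat1 (q : V2) : V2 → ℤ := fun p =>
  if p = q then -1 else if p = (q.1 + 2, q.2) then 1 else 0

/-- Sub-triangle pattern `(1, 0; -1)`. -/
def pat2 (q : V2) : V2 → ℤ := fun p =>
  if p = q then 1 else if p = (q.1 + 1, q.2 - 1) then -1 else 0

/-- Sub-triangle pattern `(0, -1; 1)`. -/
def pat3 (q : V2) : V2 → ℤ := fun p =>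
  if p = (q.1 + 2, q.2) then -1 else if p = (q.1 + 1, q.2 - 1) then 1 else 0

/-!
Every lattice edge lies in exactly one downward unit triangle, so replacing the pivot's edge `e`
by `e'` changes the alternating sign triangle by `+1` at the downward triangle of `e` and by `-1`
at that of `e'`. The pivot and the far ends of `e` and `e'` span a unit triangle. If it is
downward, `e` and `e'` lie in the same downward triangle, which is the excluded case. Otherwise it
is upward, say with corners `q`, `q + (2, 0)`, `q + (1, 1)`: its three edges lie in the downward
triangles with apexes `q`, `q + (2, 0)`, `q + (1, -1)`, the three positions of a sub-triangle, and
the three patterns are exactly the pairwise differences of the indicators of these edges.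
-/

theorem Set.ncard_inter_union_singleton_sdiff_add_indicator {α : Type*} {A T : Set α}
    (hT : T.Finite) {e e' : α} (he : e ∈ A) (he' : e' ∉ A) :
    (((A \ {e}) ∪ {e'}) ∩ T).ncard + T.indicator 1 e = (A ∩ T).ncard + T.indicator 1 e' := by
  have hind : ∀ x, T.indicator (1 : α → ℕ) x = ({x} ∩ T).ncard := fun x => by
    by_cases hx : x ∈ T <;> simp [hx]
  have hunion : ((A \ {e}) ∪ {e'}) ∩ T ∪ {e} ∩ T = A ∩ T ∪ {e'} ∩ T := by
    ext x
    by_cases hx : x = e <;> by_cases hx' : x = e' <;> simp_all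
  have hdisj : Disjoint (((A \ {e}) ∪ {e'}) ∩ T) ({e} ∩ T) := by
    rw [Set.disjoint_iff]
    rintro x ⟨⟨hx | rfl, -⟩, rfl, -⟩
    exacts [hx.2 rfl, he' he]
  have hdisj' : Disjoint (A ∩ T) ({e'} ∩ T) := by
    rw [Set.disjoint_iff]
    rintro x ⟨⟨hx, -⟩, rfl, -⟩
    exact he' hx
  rw [hind, hind, ← Set.ncard_union_eq hdisj (hT.inter_of_right _) (hT.inter_of_right _), hunion,
    Set.ncard_union_eq hdisj' (hT.inter_of_right _) (hT.inter_of_right _)]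

lemma downTriEdges_finite (p : V2) : (downTriEdges p).Finite :=
  ((Set.finite_singleton _).insert _).insert _

lemma ast_replaceEdge {G : SimpleGraph V2} {e e' : Sym2 V2} (he : e ∈ G.edgeSet)
    (he' : e' ∉ G.edgeSet) (hd : ¬ e'.IsDiag) (p : V2) :
    ast (replaceEdge G e e') p =
      ast G p + (downTriEdges p).indicator 1 e - (downTriEdges p).indicator 1 e' := by
  have hedges : (replaceEdge G e e').edgeSet = (G.edgeSet \ {e}) ∪ {e'} := by
    rw [replaceEdge, edgeSet_fromEdgeSet, sdiff_eq_left, Set.disjoint_left]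
    rintro x (hx | rfl)
    exacts [G.not_isDiag_of_mem_edgeSet hx.1, hd]
  have hcast : ∀ x, (((downTriEdges p).indicator 1 x : ℕ) : ℤ) = (downTriEdges p).indicator 1 x :=
    fun x => by by_cases hx : x ∈ downTriEdges p <;> simp [hx]
  have hcount := congrArg (Nat.cast : ℕ → ℤ)
    (Set.ncard_inter_union_singleton_sdiff_add_indicator (downTriEdges_finite p) he he')
  push_cast [hcast] at hcount
  rw [ast, ast, hedges]
  linarith

lemma eq_of_mem_downTriEdges {e : Sym2 V2} {p p' : V2} (h : e ∈ downTriEdges p)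
    (h' : e ∈ downTriEdges p') : p = p' := by
  obtain ⟨p1, p2⟩ := p
  obtain ⟨p1', p2'⟩ := p'
  simp only [downTriEdges, Set.mem_insert_iff, Set.mem_singleton_iff] at h h'
  rw [Prod.mk.injEq]
  rcases h with rfl | rfl | rfl <;> simp only [Sym2.eq_iff, Prod.mk.injEq] at h' <;> omega

lemma setOf_mem_downTriEdges_eq_singleton {e : Sym2 V2} {p : V2} (h : e ∈ downTriEdges p) :
    {p' | e ∈ downTriEdges p'} = {p} :=
  Set.ext fun _ => ⟨fun h' => eq_of_mem_downTriEdges h' h, fun h' => h' ▸ h⟩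

def upTriEdges (q : V2) : Set (Sym2 V2) :=
  {s(q, (q.1 + 1, q.2 + 1)), s((q.1 + 2, q.2), (q.1 + 1, q.2 + 1)), s(q, (q.1 + 2, q.2))}

lemma not_isDiag_of_mem_upTriEdges {e : Sym2 V2} {q : V2} (h : e ∈ upTriEdges q) :
    ¬ e.IsDiag := by
  simp only [upTriEdges, Set.mem_insert_iff, Set.mem_singleton_iff] at h
  rcases h with rfl | rfl | rfl <;> simp [Prod.ext_iff]

lemma upLeft_mem_downTriEdges_iff (q p : V2) :
    s(q, (q.1 + 1, q.2 + 1)) ∈ downTriEdges p ↔ p = q := by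
  simp only [downTriEdges, Set.mem_insert_iff, Set.mem_singleton_iff, Sym2.eq_iff, Prod.ext_iff]
  omega

lemma upRight_mem_downTriEdges_iff (q p : V2) :
    s((q.1 + 2, q.2), (q.1 + 1, q.2 + 1)) ∈ downTriEdges p ↔ p = (q.1 + 2, q.2) := by
  simp only [downTriEdges, Set.mem_insert_iff, Set.mem_singleton_iff, Sym2.eq_iff, Prod.ext_iff]
  omega

lemma upBottom_mem_downTriEdges_iff (q p : V2) :
    s(q, (q.1 + 2, q.2)) ∈ downTriEdges p ↔ p = (q.1 + 1, q.2 - 1) := by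
  simp only [downTriEdges, Set.mem_insert_iff, Set.mem_singleton_iff, Sym2.eq_iff, Prod.ext_iff]
  omega

lemma pat1_eq_indicator_sub (q p : V2) :
    pat1 q p = (downTriEdges p).indicator 1 s((q.1 + 2, q.2), (q.1 + 1, q.2 + 1)) -
      (downTriEdges p).indicator 1 s(q, (q.1 + 1, q.2 + 1)) := by
  classical
  simp only [pat1, Set.indicator_apply, upLeft_mem_downTriEdges_iff, upRight_mem_downTriEdges_iff,
    Pi.one_apply]
  split_ifs <;> simp_all [Prod.ext_iff]

lemma pat2_eq_indicator_sub (q p : V2) :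
    pat2 q p = (downTriEdges p).indicator 1 s(q, (q.1 + 1, q.2 + 1)) -
      (downTriEdges p).indicator 1 s(q, (q.1 + 2, q.2)) := by
  classical
  simp only [pat2, Set.indicator_apply, upLeft_mem_downTriEdges_iff, upBottom_mem_downTriEdges_iff,
    Pi.one_apply]
  split_ifs <;> simp_all [Prod.ext_iff]

lemma pat3_eq_indicator_sub (q p : V2) :
    pat3 q p = (downTriEdges p).indicator 1 s(q, (q.1 + 2, q.2)) -
      (downTriEdges p).indicator 1 s((q.1 + 2, q.2), (q.1 + 1, q.2 + 1)) := by
  classical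
  simp only [pat3, Set.indicator_apply, upBottom_mem_downTriEdges_iff, upRight_mem_downTriEdges_iff,
    Pi.one_apply]
  split_ifs <;> simp_all [Prod.ext_iff]

lemma exists_pattern_of_mem_upTriEdges {e e' : Sym2 V2} {q : V2} (he : e ∈ upTriEdges q)
    (he' : e' ∈ upTriEdges q) (hne : e ≠ e') :
    ∃ ε : ℤ, (ε = 1 ∨ ε = -1) ∧
      ((∀ p, (downTriEdges p).indicator 1 e - (downTriEdges p).indicator 1 e' = ε * pat1 q p) ∨
       (∀ p, (downTriEdges p).indicator 1 e - (downTriEdges p).indicator 1 e' = ε * pat2 q p) ∨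
       (∀ p, (downTriEdges p).indicator 1 e - (downTriEdges p).indicator 1 e' = ε * pat3 q p)) := by
  simp only [upTriEdges, Set.mem_insert_iff, Set.mem_singleton_iff] at he he'
  rcases he with rfl | rfl | rfl <;> rcases he' with rfl | rfl | rfl
  · exact absurd rfl hne
  · exact ⟨-1, .inr rfl, .inl fun p => by rw [pat1_eq_indicator_sub]; ring⟩
  · exact ⟨1, .inl rfl, .inr (.inl fun p => by rw [pat2_eq_indicator_sub]; ring)⟩
  · exact ⟨1, .inl rfl, .inl fun p => by rw [pat1_eq_indicator_sub]; ring⟩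
  · exact absurd rfl hne
  · exact ⟨-1, .inr rfl, .inr (.inr fun p => by rw [pat3_eq_indicator_sub]; ring)⟩
  · exact ⟨-1, .inr rfl, .inr (.inl fun p => by rw [pat2_eq_indicator_sub]; ring)⟩
  · exact ⟨1, .inl rfl, .inr (.inr fun p => by rw [pat3_eq_indicator_sub]; ring)⟩
  · exact absurd rfl hne

lemma mem_upTriEdges_or_downTriEdges_of_rotate {v w w' : V2} (hvw : latticeAdj v w)
    (hrot : w' - v = cw (w - v) ∨ w' - v = ccw (w - v)) :
    (∃ q, s(v, w) ∈ upTriEdges q ∧ s(v, w') ∈ upTriEdges q) ∨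
      ∃ p, s(v, w) ∈ downTriEdges p ∧ s(v, w') ∈ downTriEdges p := by
  obtain ⟨x, y⟩ := v
  obtain ⟨a, b⟩ := w
  obtain ⟨a', b'⟩ := w'
  simp only [latticeAdj, Set.mem_insert_iff, Set.mem_singleton_iff, Prod.mk.injEq] at hvw
  simp only [cw, ccw, Prod.mk_sub_mk, Prod.mk.injEq] at hrot
  simp only [upTriEdges, downTriEdges, Set.mem_insert_iff, Set.mem_singleton_iff, Sym2.eq_iff,
    Prod.mk.injEq, Prod.exists]
  rcases hvw with h | h | h | h | h | h <;> rcases hrot with h' | h'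
  · exact .inr ⟨x + 1, y - 1, by omega⟩
  · exact .inl ⟨x, y, by omega⟩
  · exact .inl ⟨x - 2, y, by omega⟩
  · exact .inr ⟨x - 1, y - 1, by omega⟩
  · exact .inl ⟨x, y, by omega⟩
  · exact .inr ⟨x, y, by omega⟩
  · exact .inr ⟨x - 1, y - 1, by omega⟩
  · exact .inl ⟨x - 1, y - 1, by omega⟩
  · exact .inl ⟨x - 1, y - 1, by omega⟩
  · exact .inr ⟨x + 1, y - 1, by omega⟩
  · exact .inr ⟨x, y, by omega⟩
  · exact .inl ⟨x - 2, y, by omega⟩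

theorem spin_type246_pattern_general (n : ℕ) (G G' : SimpleGraph V2) (hG : IsGrove n G)
    (v w w' : V2) (hdeg : ∀ u, G.Adj v u ↔ u = w)
    (hrot : w' - v = cw (w - v) ∨ w' - v = ccw (w - v))
    (hG' : G' = replaceEdge G s(v, w) s(v, w'))
    (htype : {p : V2 | s(v, w) ∈ downTriEdges p} ≠ {p : V2 | s(v, w') ∈ downTriEdges p}) :
    ∃ q : V2, ∃ ε : ℤ, (ε = 1 ∨ ε = -1) ∧
      ((∀ p, ast G' p = ast G p + ε * pat1 q p) ∨
       (∀ p, ast G' p = ast G p + ε * pat2 q p) ∨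
       (∀ p, ast G' p = ast G p + ε * pat3 q p)) := by
  subst hG'
  have hne : s(v, w) ≠ s(v, w') := fun h => htype (by rw [h])
  have he : s(v, w) ∈ G.edgeSet := (hdeg w).2 rfl
  have he' : s(v, w') ∉ G.edgeSet := fun h => hne (by rw [(hdeg w').1 h])
  rcases mem_upTriEdges_or_downTriEdges_of_rotate (hG.supported he).2.2 hrot with
    ⟨q, hup, hup'⟩ | ⟨p, hdown, hdown'⟩
  · obtain ⟨ε, hε, hpat⟩ := exists_pattern_of_mem_upTriEdges hup hup' hne
    refine ⟨q, ε, hε, ?_⟩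
    simp only [ast_replaceEdge he he' (not_isDiag_of_mem_upTriEdges hup'), add_sub_assoc,
      add_right_inj]
    exact hpat
  · exact absurd ((setOf_mem_downTriEdges_eq_singleton hdown).trans
      (setOf_mem_downTriEdges_eq_singleton hdown').symm) htype

/-- A spin that changes which downward triangles contain the pivot's edge (a spin of
type 2, 4, or 6) changes the alternating sign triangle by adding or subtracting
exactly one of the three sub-triangle patterns. -/
theorem spin_type246_pattern (n : ℕ) (G G' : SimpleGraph V2) (hG : IsGrove n G)
    (v w w' : V2) (hv : v ∈ interiorVerts n) (hdeg : ∀ u, G.Adj v u ↔ u = w)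
    (hrot : w' - v = cw (w - v) ∨ w' - v = ccw (w - v))
    (hG' : G' = replaceEdge G s(v, w) s(v, w'))
    (htype : {p : V2 | s(v, w) ∈ downTriEdges p} ≠ {p : V2 | s(v, w') ∈ downTriEdges p}) :
    ∃ q : V2, ∃ ε : ℤ, (ε = 1 ∨ ε = -1) ∧
      ((∀ p, ast G' p = ast G p + ε * pat1 q p) ∨
       (∀ p, ast G' p = ast G p + ε * pat2 q p) ∨
       (∀ p, ast G' p = ast G p + ε * pat3 q p)) :=
  spin_type246_pattern_general n G G' hG v w w' hdeg hrot hG' htype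
end

section
/- If a simplified grove G of size n differs from the target grove, then its difference grove contains at least one red edge (an edge of G not in the target grove). -/
open SimpleGraph

/-- The edges of the target grove of size `n`: for each east pair (`i = n - 2a`) the
straight path hugging the east boundary; for each west pair (and the middle triplet,
`2a = n`) the `V`-shaped path of `a` down-right steps followed by `a` horizontal steps
back to the west partner; for each south pair the horizontal path along its row. -/
def targetEdgeSet (n : ℕ) : Set (Sym2 V2) :=
  {e | ∃ a k : ℤ, 0 < a ∧ 2 * a < (n : ℤ) ∧ 0 ≤ k ∧ k < a ∧
      e = s((((n : ℤ) - 2 * a + k, -k) : V2), ((n : ℤ) - 2 * a + k + 1, -(k + 1)))} ∪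
  {e | ∃ a k : ℤ, 0 < a ∧ 2 * a ≤ (n : ℤ) ∧ 0 ≤ k ∧ k < a ∧
      e = s(((2 * a - (n : ℤ) + k, -k) : V2), (2 * a - (n : ℤ) + k + 1, -(k + 1)))} ∪
  {e | ∃ a m : ℤ, 0 < a ∧ 2 * a ≤ (n : ℤ) ∧ 0 ≤ m ∧ m < a ∧
      e = s(((a - (n : ℤ) + 2 * m, -a) : V2), (a - (n : ℤ) + 2 * m + 2, -a))} ∪
  {e | ∃ i m : ℤ, (n : ℤ) < 2 * i ∧ i < (n : ℤ) ∧ 0 ≤ m ∧ m < (n : ℤ) - i ∧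
      e = s(((-(n : ℤ) + i + 2 * m, -i) : V2), (-(n : ℤ) + i + 2 * m + 2, -i))}

/-- The target grove of size `n`. -/
def targetGrove (n : ℕ) : SimpleGraph V2 :=
  SimpleGraph.fromEdgeSet (targetEdgeSet n)

/-!
Every edge of the target grove lies on the target path joining two vertices `u`, `v` of one
boundary set, and, since the target paths are pairwise disjoint, it is the only target edge
leaving the part of that path between `u` and the edge. A grove `G` without red edges still
connects `u` to `v`; a `u`–`v` walk in `G` has to leave that part along an edge of `G`, which is a
target edge and hence the given one. So `G` contains every target edge, and `G` is the target grove.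
-/

def UniqueExit {V : Type*} (T : Set (Sym2 V)) (S : Set V) (e : Sym2 V) : Prop :=
  ∀ x y, s(x, y) ∈ T → x ∈ S → y ∉ S → s(x, y) = e

theorem SimpleGraph.Reachable.mem_edgeSet_of_uniqueExit {V : Type*} {G : SimpleGraph V}
    {T : Set (Sym2 V)} {S : Set V} {e : Sym2 V} {u v : V} (huv : G.Reachable u v)
    (hGT : G.edgeSet ⊆ T) (hu : u ∈ S) (hv : v ∉ S) (he : UniqueExit T S e) :
    e ∈ G.edgeSet := by
  obtain ⟨w⟩ := huv
  obtain ⟨d, -, hdS, hdS'⟩ := w.exists_boundary_dart S hu hv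
  have hd : s(d.fst, d.snd) ∈ G.edgeSet := d.adj
  rwa [← he _ _ (hGT hd) hdS hdS']

def BoundaryPartners (n : ℕ) (u v : V2) : Prop :=
  ∃ S ∈ boundarySets n, u ∈ S ∧ v ∈ S

theorem BoundaryPartners.symm {n : ℕ} {u v : V2} (h : BoundaryPartners n u v) :
    BoundaryPartners n v u :=
  let ⟨S, hS, hu, hv⟩ := h
  ⟨S, hS, hv, hu⟩

theorem IsGrove.reachable_of_boundaryPartners {n : ℕ} {G : SimpleGraph V2} (hG : IsGrove n G)
    {u v : V2} (huv : BoundaryPartners n u v) : G.Reachable u v :=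
  let ⟨S, hS, hu, hv⟩ := huv
  hG.conn_in S hS u hu v hv

theorem boundaryPartners_east {n : ℕ} {a : ℤ} (ha : 0 < a) (han : 2 * a < (n : ℤ)) :
    BoundaryPartners n ((n : ℤ) - a, -a) ((n : ℤ) - 2 * a, 0) :=
  ⟨_, .inl (.inl (.inr ⟨a, ha, han, rfl⟩)), by simp, by simp⟩

/-- For `2 * a = n` the two vertices are two corners of the middle triplet. -/
theorem boundaryPartners_west {n : ℕ} {a : ℤ} (ha : 0 < a) (han : 2 * a ≤ (n : ℤ)) :
    BoundaryPartners n (2 * a - (n : ℤ), 0) (a - (n : ℤ), -a) := by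
  rcases han.lt_or_eq with han | han
  · exact ⟨_, .inl (.inl (.inl (.inr ⟨a, ha, han, rfl⟩))), by simp, by simp⟩
  · refine ⟨_, .inr ⟨a, ha, han, rfl⟩, ?_, ?_⟩ <;> simp <;> omega

theorem boundaryPartners_south {n : ℕ} {i : ℤ} (hi : (n : ℤ) < 2 * i) (hin : i < (n : ℤ)) :
    BoundaryPartners n (-(n : ℤ) + i, -i) ((n : ℤ) - i, -i) :=
  ⟨_, .inl (.inr ⟨i, hi, hin, rfl⟩), by simp, by simp⟩

def SeparatesBoundaryPartners (n : ℕ) (e : Sym2 V2) : Prop :=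
  ∃ u v : V2, ∃ S : Set V2, BoundaryPartners n u v ∧ u ∈ S ∧ v ∉ S ∧
    UniqueExit (targetEdgeSet n) S e

theorem IsGrove.mem_edgeSet_of_separatesBoundaryPartners {n : ℕ} {G : SimpleGraph V2}
    (hG : IsGrove n G) (hGT : G.edgeSet ⊆ targetEdgeSet n) {e : Sym2 V2}
    (he : SeparatesBoundaryPartners n e) : e ∈ G.edgeSet :=
  let ⟨_, _, _, huv, hu, hv, hexit⟩ := he
  (hG.reachable_of_boundaryPartners huv).mem_edgeSet_of_uniqueExit hGT hu hv hexit

theorem separatesBoundaryPartners_east {n : ℕ} {a k : ℤ} (ha : 0 < a) (han : 2 * a < (n : ℤ))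
    (hk : 0 ≤ k) (hka : k < a) :
    SeparatesBoundaryPartners n
      s(((n : ℤ) - 2 * a + k, -k), ((n : ℤ) - 2 * a + k + 1, -(k + 1))) := by
  refine ⟨_, _, {p | p.1 + p.2 = (n : ℤ) - 2 * a ∧ -a ≤ p.2 ∧ p.2 ≤ -(k + 1)},
    boundaryPartners_east ha han, by simp; omega, by simp; omega, ?_⟩
  rintro ⟨x₁, x₂⟩ ⟨y₁, y₂⟩ hxy hx hy
  simp only [Set.mem_ofPred_eq] at hx hy
  obtain (((⟨b, j, hb⟩ | ⟨b, j, hb⟩) | ⟨b, j, hb⟩) | ⟨b, j, hb⟩) := hxy <;>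
    simp only [Sym2.eq_iff, Prod.mk.injEq] at hb ⊢ <;> omega

theorem separatesBoundaryPartners_westDiagonal {n : ℕ} {a k : ℤ} (ha : 0 < a)
    (han : 2 * a ≤ (n : ℤ)) (hk : 0 ≤ k) (hka : k < a) :
    SeparatesBoundaryPartners n
      s((2 * a - (n : ℤ) + k, -k), (2 * a - (n : ℤ) + k + 1, -(k + 1))) := by
  refine ⟨_, _, {p | p.1 + p.2 = 2 * a - (n : ℤ) ∧ -k ≤ p.2 ∧ p.2 ≤ 0},
    boundaryPartners_west ha han, by simp; omega, by simp; omega, ?_⟩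
  rintro ⟨x₁, x₂⟩ ⟨y₁, y₂⟩ hxy hx hy
  simp only [Set.mem_ofPred_eq] at hx hy
  obtain (((⟨b, j, hb⟩ | ⟨b, j, hb⟩) | ⟨b, j, hb⟩) | ⟨b, j, hb⟩) := hxy <;>
    simp only [Sym2.eq_iff, Prod.mk.injEq] at hb ⊢ <;> omega

theorem separatesBoundaryPartners_westHorizontal {n : ℕ} {a m : ℤ} (ha : 0 < a)
    (han : 2 * a ≤ (n : ℤ)) (hm : 0 ≤ m) (hma : m < a) :
    SeparatesBoundaryPartners n
      s((a - (n : ℤ) + 2 * m, -a), (a - (n : ℤ) + 2 * m + 2, -a)) := by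
  refine ⟨_, _, {p | p.2 = -a ∧ a - (n : ℤ) ≤ p.1 ∧ p.1 ≤ a - (n : ℤ) + 2 * m},
    (boundaryPartners_west ha han).symm, by simp; omega, by simp; omega, ?_⟩
  rintro ⟨x₁, x₂⟩ ⟨y₁, y₂⟩ hxy hx hy
  simp only [Set.mem_ofPred_eq] at hx hy
  obtain (((⟨b, j, hb⟩ | ⟨b, j, hb⟩) | ⟨b, j, hb⟩) | ⟨b, j, hb⟩) := hxy <;>
    simp only [Sym2.eq_iff, Prod.mk.injEq] at hb ⊢ <;> omega

theorem separatesBoundaryPartners_south {n : ℕ} {i m : ℤ} (hi : (n : ℤ) < 2 * i)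
    (hin : i < (n : ℤ)) (hm : 0 ≤ m) (hmi : m < (n : ℤ) - i) :
    SeparatesBoundaryPartners n
      s((-(n : ℤ) + i + 2 * m, -i), (-(n : ℤ) + i + 2 * m + 2, -i)) := by
  refine ⟨_, _, {p | p.2 = -i ∧ -(n : ℤ) + i ≤ p.1 ∧ p.1 ≤ -(n : ℤ) + i + 2 * m},
    boundaryPartners_south hi hin, by simp; omega, by simp; omega, ?_⟩
  rintro ⟨x₁, x₂⟩ ⟨y₁, y₂⟩ hxy hx hy
  simp only [Set.mem_ofPred_eq] at hx hy
  obtain (((⟨b, j, hb⟩ | ⟨b, j, hb⟩) | ⟨b, j, hb⟩) | ⟨b, j, hb⟩) := hxy <;>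
    simp only [Sym2.eq_iff, Prod.mk.injEq] at hb ⊢ <;> omega

theorem separatesBoundaryPartners_of_mem_targetEdgeSet {n : ℕ} {e : Sym2 V2}
    (he : e ∈ targetEdgeSet n) : SeparatesBoundaryPartners n e := by
  obtain (((⟨a, k, ha, han, hk, hka, rfl⟩ | ⟨a, k, ha, han, hk, hka, rfl⟩) |
    ⟨a, m, ha, han, hm, hma, rfl⟩) | ⟨i, m, hi, hin, hm, hmi, rfl⟩) := he
  · exact separatesBoundaryPartners_east ha han hk hka
  · exact separatesBoundaryPartners_westDiagonal ha han hk hka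
  · exact separatesBoundaryPartners_westHorizontal ha han hm hma
  · exact separatesBoundaryPartners_south hi hin hm hmi

/-- If a simplified grove of size `n` differs from the target grove, then it has at
least one red edge: an edge not belonging to the target grove. -/
theorem exists_red_edge (n : ℕ) (G : SimpleGraph V2) (hG : IsGrove n G)
    (hne : G ≠ targetGrove n) :
    ∃ e ∈ G.edgeSet, e ∉ (targetGrove n).edgeSet := by
  by_contra! hred
  have hT : (targetGrove n).edgeSet ⊆ targetEdgeSet n := by
    rw [targetGrove, edgeSet_fromEdgeSet]
    exact Set.sdiff_subset
  have hGT : G.edgeSet ⊆ targetEdgeSet n := Set.Subset.trans hred hT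
  refine hne (edgeSet_injective (Set.Subset.antisymm hred (hT.trans fun e he => ?_)))
  exact hG.mem_edgeSet_of_separatesBoundaryPartners hGT
    (separatesBoundaryPartners_of_mem_targetEdgeSet he)
end
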